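/- arXiv:2209.03601 — 2 statements merged into one kernel-verified Lean document; each statement's English description precedes it below -/
import Mathlib

section
/- Let H be a Hilbert space and let u, z, w ∈ H and sesquilinear forms b⁻, b⁺ on H with b⁺ coercive: Re(σ b⁺(v,v)) ≥ C₀ ‖v‖² for all v and some unimodular σ. Suppose z satisfies b⁻(z, w) = b⁻(u, w) − b⁺(u, w) for all w ∈ H and ‖z‖ ≤ M ‖u‖ for some M ≥ 0. Then sup_{v ≠ 0} |b⁻(v, u)| / (‖u‖ ‖v‖) ≥ C₀ / (1 + M) for every u ≠ 0, i.e. the inf-sup constant of b⁻ is at least C₀/(1+M). -/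
/-!
Test the inf-sup quotient with `v = u - z`. The defining identity of `z` gives
`b⁻(u - z, u) = b⁺(u, u)`, whose modulus is at least `C₀ ‖u‖²` by coercivity of `b⁺`,
while `‖u - z‖ ≤ (1 + M) ‖u‖`. In particular `u - z ≠ 0`, since `b⁺(u, u) ≠ 0`.
-/

lemma Complex.le_norm_of_le_re_mul {σ x : ℂ} {c : ℝ} (hσ : ‖σ‖ = 1) (h : c ≤ (σ * x).re) :
    c ≤ ‖x‖ :=
  calc c ≤ (σ * x).re := h
    _ ≤ ‖σ * x‖ := Complex.re_le_norm _
    _ = ‖x‖ := by rw [norm_mul, hσ, one_mul]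

lemma norm_sub_le_one_add_mul_norm {E : Type*} [SeminormedAddCommGroup E] {u z : E} {M : ℝ}
    (h : ‖z‖ ≤ M * ‖u‖) : ‖u - z‖ ≤ (1 + M) * ‖u‖ :=
  calc ‖u - z‖ ≤ ‖u‖ + ‖z‖ := norm_sub_le _ _
    _ ≤ (1 + M) * ‖u‖ := by linarith

lemma div_mul_mul_le_of_le_mul_sq {C K a d b : ℝ} (hC : 0 ≤ C) (hK : 0 < K) (ha : 0 ≤ a)
    (hd : d ≤ K * a) (hb : C * a ^ 2 ≤ b) : C / K * (a * d) ≤ b :=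
  calc C / K * (a * d) ≤ C / K * (a * (K * a)) := by gcongr
    _ = C * a ^ 2 := by field_simp
    _ ≤ b := hb

theorem stmt_15_general {H : Type*} [NormedAddCommGroup H] [InnerProductSpace ℂ H]
    (bm bp : H →L[ℂ] H →L⋆[ℂ] ℂ) (C₀ M : ℝ) (hC₀ : 0 < C₀) (hM : 0 ≤ M)
    (σ : ℂ) (hσ : ‖σ‖ = 1)
    (hcoer : ∀ v : H, C₀ * ‖v‖ ^ 2 ≤ (σ * bp v v).re)
    (u z : H) (hz : ∀ w : H, bm z w = bm u w - bp u w) (hzM : ‖z‖ ≤ M * ‖u‖)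
    (hu : u ≠ 0) :
    ∃ v : H, v ≠ 0 ∧ C₀ / (1 + M) * (‖u‖ * ‖v‖) ≤ ‖bm v u‖ := by
  have htest : bm (u - z) u = bp u u := by simp [hz u]
  have hbound : C₀ * ‖u‖ ^ 2 ≤ ‖bm (u - z) u‖ :=
    htest ▸ Complex.le_norm_of_le_re_mul hσ (hcoer u)
  refine ⟨u - z, fun hzero ↦ ?_, ?_⟩
  · rw [hzero, map_zero, zero_apply, norm_zero] at hbound
    exact (mul_pos hC₀ (pow_pos (norm_pos_iff.2 hu) 2)).not_ge hbound
  · exact div_mul_mul_le_of_le_mul_sq hC₀.le (by linarith) (norm_nonneg u)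
      (norm_sub_le_one_add_mul_norm hzM) hbound

/-- Inf-sup lower bound from coercivity of the auxiliary form: with
`b⁻(z,·) = b⁻(u,·) - b⁺(u,·)` and `‖z‖ ≤ M ‖u‖`, the test function `v = u - z`
shows that the inf-sup constant of `b⁻` is at least `C₀/(1+M)`. -/
theorem stmt_15 {H : Type*} [NormedAddCommGroup H] [InnerProductSpace ℂ H] [CompleteSpace H]
    (bm bp : H →L[ℂ] H →L⋆[ℂ] ℂ) (C₀ M : ℝ) (hC₀ : 0 < C₀) (hM : 0 ≤ M)
    (σ : ℂ) (hσ : ‖σ‖ = 1)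
    (hcoer : ∀ v : H, C₀ * ‖v‖ ^ 2 ≤ (σ * bp v v).re)
    (u z : H) (hz : ∀ w : H, bm z w = bm u w - bp u w) (hzM : ‖z‖ ≤ M * ‖u‖)
    (hu : u ≠ 0) :
    ∃ v : H, v ≠ 0 ∧ C₀ / (1 + M) * (‖u‖ * ‖v‖) ≤ ‖bm v u‖ :=
  stmt_15_general bm bp C₀ M hC₀ hM σ hσ hcoer u z hz hzM hu
end

section
/- Let b⁻ and b⁺ be bounded sesquilinear forms on a Hilbert space H with b⁺ coercive: Re(σ b⁺(v,v)) ≥ (1/C₀) ‖v‖² for all v ∈ H and some unimodular σ ∈ ℂ. Let V_h ⊆ H be a subspace and e ∈ H satisfy the Galerkin orthogonality b⁻(e, v_h) = 0 for all v_h ∈ V_h. Suppose further |b⁻(e, e) − b⁺(e, e)| ≤ δ ‖e‖², and that for the specific w ∈ H with e = w − w_h one has |b⁻(e, w − Π w)| ≤ L ‖e‖ d, where d = inf_{v_h ∈ V_h} ‖w − v_h‖. Then (1 − C₀ δ) ‖e‖² ≤ C₀ L ‖e‖ d, i.e. if C₀ δ < 1 then ‖e‖ ≤ C₀ L (1 −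 C₀ δ)⁻¹ d. -/
/-- Skeleton of the Schatz-type duality argument: coercivity of `b⁺`, Galerkin
orthogonality of the error `e`, absorption of `|b⁻(e,e) - b⁺(e,e)| ≤ δ‖e‖²`, and the
duality bound on `b⁻(e, w - Pw)` yield quasi-optimality. -/
theorem stmt_18 {H : Type*} [NormedAddCommGroup H] [InnerProductSpace ℂ H] [CompleteSpace H]
    (bm bp : H →L[ℂ] H →L⋆[ℂ] ℂ) (Vh : Submodule ℂ H)
    (C₀ δ L : ℝ) (hC₀ : 0 < C₀) (hδ0 : 0 ≤ δ) (hL : 0 ≤ L)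
    (σ : ℂ) (hσ : ‖σ‖ = 1)
    (hcoer : ∀ v : H, (1 / C₀) * ‖v‖ ^ 2 ≤ (σ * bp v v).re)
    (e w wh Pw : H) (hwh : wh ∈ Vh) (hPw : Pw ∈ Vh) (he : e = w - wh)
    (hGalerkin : ∀ vh ∈ Vh, bm e vh = 0)
    (hΔ : ‖bm e e - bp e e‖ ≤ δ * ‖e‖ ^ 2)
    (hdualbd : ‖bm e (w - Pw)‖ ≤ L * ‖e‖ * Metric.infDist w (Vh : Set H)) :
    (1 - C₀ * δ) * ‖e‖ ^ 2 ≤ C₀ * L * ‖e‖ * Metric.infDist w (Vh : Set H) ∧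
    (C₀ * δ < 1 →
      ‖e‖ ≤ C₀ * L * (1 - C₀ * δ)⁻¹ * Metric.infDist w (Vh : Set H)) := by
  set d := Metric.infDist w (Vh : Set H) with hd
  have hd0 : 0 ≤ d := Metric.infDist_nonneg
  have hkey : bm e e = bm e (w - Pw) := by
    have h1 : bm e wh = 0 := hGalerkin wh hwh
    have h2 : bm e Pw = 0 := hGalerkin Pw hPw
    calc bm e e = bm e (w - wh) := by rw [← he]
      _ = bm e w - bm e wh := map_sub _ _ _
      _ = bm e w - bm e Pw := by rw [h1, h2]
      _ = bm e (w - Pw) := (map_sub _ _ _).symm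
  have hsplit : σ * bp e e = σ * bm e (w - Pw) - σ * (bm e e - bp e e) := by
    rw [← hkey]; ring
  have hre : (σ * bp e e).re ≤ ‖bm e (w - Pw)‖ + ‖bm e e - bp e e‖ := by
    rw [hsplit]
    calc (σ * bm e (w - Pw) - σ * (bm e e - bp e e)).re
        ≤ ‖σ * bm e (w - Pw) - σ * (bm e e - bp e e)‖ := Complex.re_le_norm _
      _ ≤ ‖σ * bm e (w - Pw)‖ + ‖σ * (bm e e - bp e e)‖ := norm_sub_le _ _
      _ = ‖bm e (w - Pw)‖ + ‖bm e e - bp e e‖ := by simp [norm_mul, hσ]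
  have hmain : (1 / C₀) * ‖e‖ ^ 2 ≤ L * ‖e‖ * d + δ * ‖e‖ ^ 2 := by
    have := (hcoer e).trans hre
    linarith
  have hpart1 : (1 - C₀ * δ) * ‖e‖ ^ 2 ≤ C₀ * L * ‖e‖ * d := by
    have h := mul_le_mul_of_nonneg_left hmain hC₀.le
    have hc : C₀ * (1 / C₀) = 1 := by field_simp
    nlinarith [h, hc]
  refine ⟨hpart1, fun hlt => ?_⟩
  have hc : 0 < 1 - C₀ * δ := by linarith
  rcases eq_or_lt_of_le (norm_nonneg e) with h0 | h0
  · rw [← h0]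
    have : 0 ≤ (1 - C₀ * δ)⁻¹ := (inv_pos.mpr hc).le
    positivity
  · have h1 : (1 - C₀ * δ) * ‖e‖ ≤ C₀ * L * d :=
      le_of_mul_le_mul_right (by nlinarith [hpart1]) h0
    calc ‖e‖ = (1 - C₀ * δ)⁻¹ * ((1 - C₀ * δ) * ‖e‖) := by field_simp
      _ ≤ (1 - C₀ * δ)⁻¹ * (C₀ * L * d) :=
          mul_le_mul_of_nonneg_left h1 (inv_pos.mpr hc).le
      _ = C₀ * L * (1 - C₀ * δ)⁻¹ * d := by ring
end
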